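/- Let u ∈ U, τ ∈ (0,1), v ∈ B(0,ρ_max), and let u^ε be the perturbed control equal to v on (τ−ε, τ] and to u elsewhere. Let x₁ and x₁^ε be the solutions on [0,1] of ẋ = f(x,u) and ẋ = f(x,u^ε) starting at x₀. Then the right derivative Ψ₁(τ) := lim_{ε→0⁺} (x₁^ε(τ) − x₁(τ))/ε exists and equals f(x₁(τ), v) − f(x₁(τ), u(τ)). -/

import Mathlib

/-!
The two controls agree before `τ - ε`, so by Grönwall's inequality the two states still coincide
at `τ - ε`. On `(τ - ε, τ]` the controls differ by at most `2 ρmax`, and Grönwall again keeps the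
states `O(ε)` apart there. Hence `x^ε(τ) - x(τ)` is the integral over `(τ - ε, τ]` of
`f(x^ε, v) - f(x, u)`, an integrand that by the Lipschitz bound, the continuity of `x` and the left
continuity of `u` at `τ` is uniformly close to `f(x(τ), v) - f(x(τ), u(τ))` as `ε → 0⁺`.
-/

open Set MeasureTheory Filter Topology

noncomputable section

open scoped Classical

abbrev EucSp (n : ℕ) := EuclideanSpace ℝ (Fin n)

/-- A function is piecewise continuous on `s` if it is continuous within `s` outside of a
finite set of points. -/
def PiecewiseContinuousOn {E : Type*} [TopologicalSpace E] (u : ℝ → E) (s : Set ℝ) : Prop :=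
  ∃ D : Finset ℝ, ∀ t ∈ s, t ∉ D → ContinuousWithinAt u s t

/-- Admissible controls: piecewise continuous functions on `[0, T]` with values in the
closed ball of radius `ρmax`. -/
def AdmissibleCtrl {m : ℕ} (T ρmax : ℝ) (u : ℝ → EucSp m) : Prop :=
  PiecewiseContinuousOn u (Set.Icc 0 T) ∧ ∀ t ∈ Set.Icc (0 : ℝ) T, ‖u t‖ ≤ ρmax

/-- `x` is a (Carathéodory) solution of `ẋ = f(x, u(t))` on `[a, b]`, in integral form. -/
def IsSolOn {nx m : ℕ} (f : EucSp nx → EucSp m → EucSp nx) (u : ℝ → EucSp m)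
    (a b : ℝ) (x : ℝ → EucSp nx) : Prop :=
  ContinuousOn x (Set.Icc a b) ∧
    ∀ t ∈ Set.Icc a b, x t = x a + ∫ s in a..t, f (x s) (u s)

/-- The modes `x i : [i-1, i] → ℝ^{n_x}` of the hybrid system with time-driven switching:
`x 1 0 = x₀`, each mode solves `ẋ = f(x, u)` on `[i-1, i]`, and modes are linked by the jump
map `g` with observation `y i`. -/
def HybridModes {nx ny m : ℕ} (T : ℕ) (f : EucSp nx → EucSp m → EucSp nx)
    (g : EucSp nx → EucSp ny → EucSp nx) (u : ℝ → EucSp m) (y : ℕ → EucSp ny)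
    (x₀ : EucSp nx) (x : ℕ → ℝ → EucSp nx) : Prop :=
  x 1 0 = x₀ ∧
    (∀ i : ℕ, 1 ≤ i → i ≤ T → IsSolOn f u ((i : ℝ) - 1) (i : ℝ) (x i)) ∧
    (∀ i : ℕ, 1 ≤ i → i + 1 ≤ T → x (i + 1) (i : ℝ) = g (x i (i : ℝ)) (y i))

/-- The hybrid trajectory `X` built from the modes: `X t = x i t` on `[i-1, i)` and
`X T = g (x T T) (y T)`. -/
def IsHybridTraj {nx ny : ℕ} (T : ℕ) (g : EucSp nx → EucSp ny → EucSp nx)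
    (y : ℕ → EucSp ny) (x : ℕ → ℝ → EucSp nx) (X : ℝ → EucSp nx) : Prop :=
  (∀ i : ℕ, 1 ≤ i → i ≤ T → ∀ t ∈ Set.Ico ((i : ℝ) - 1) (i : ℝ), X t = x i t) ∧
    X (T : ℝ) = g (x T (T : ℝ)) (y T)

/-- The perturbed control: equal to `v` on `(τ - ε, τ]` and to `u` elsewhere. -/
def perturb {m : ℕ} (u : ℝ → EucSp m) (τ : ℝ) (v : EucSp m) (ε : ℝ) : ℝ → EucSp m :=
  fun t => if τ - ε < t ∧ t ≤ τ then v else u t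

open Real
open scoped Interval

theorem mul_gronwallBound_zero_add (K B x : ℝ) :
    K * gronwallBound 0 K B x + B = B * exp (K * x) := by
  rcases eq_or_ne K 0 with rfl | hK
  · simp [gronwallBound_K0]
  · rw [gronwallBound_of_K_ne_0 hK]
    field_simp
    ring

theorem norm_le_mul_exp_of_norm_le_integral {E : Type*} [NormedAddCommGroup E]
    {g : ℝ → E} {a b K B : ℝ} (hK : 0 ≤ K) (hg : ContinuousOn g (Icc a b))
    (hbound : ∀ t ∈ Icc a b, ‖g t‖ ≤ K * (∫ s in a..t, ‖g s‖) + B) :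
    ∀ t ∈ Icc a b, ‖g t‖ ≤ B * exp (K * (t - a)) := by
  rcases lt_or_ge b a with hba | hab
  · simp [Icc_eq_empty_of_lt hba]
  -- the integral of `‖g‖` clamped to `[a, b]` is differentiable everywhere, so the differential
  -- Grönwall inequality applies to it
  set φ : ℝ → ℝ := fun s => ‖g (projIcc a b hab s)‖
  have hφ : Continuous φ := (hg.comp_continuous (continuous_subtype_val.comp continuous_projIcc)
    fun s => (projIcc a b hab s).2).norm
  set ψ : ℝ → ℝ := fun t => ∫ s in a..t, φ s
  have hψ : ∀ t ∈ Icc a b, ψ t = ∫ s in a..t, ‖g s‖ := fun t ht =>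
    intervalIntegral.integral_congr fun s hs => by
      rw [uIcc_of_le ht.1] at hs
      simp [φ, projIcc_of_mem hab ⟨hs.1, hs.2.trans ht.2⟩]
  have hψ_le : ∀ t ∈ Icc a b, ψ t ≤ gronwallBound 0 K B (t - a) := fun t ht =>
    (le_abs_self _).trans <| norm_le_gronwallBound_of_norm_deriv_right_le (f := ψ) (f' := φ)
      (fun t _ => (hφ.integral_hasStrictDerivAt a t).hasDerivAt.continuousAt.continuousWithinAt)
      (fun t _ => (hφ.integral_hasStrictDerivAt a t).hasDerivAt.hasDerivWithinAt)
      (by simp [ψ])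
      (fun t ht => by
        have ht' : t ∈ Icc a b := Ico_subset_Icc_self ht
        simp only [φ, norm_norm, projIcc_of_mem hab ht']
        exact (hbound t ht').trans (by rw [← hψ t ht']; gcongr; exact le_abs_self _))
      t ht
  intro t ht
  calc ‖g t‖ ≤ K * ψ t + B := by rw [hψ t ht]; exact hbound t ht
    _ ≤ K * gronwallBound 0 K B (t - a) + B := by gcongr; exact hψ_le t ht
    _ = B * exp (K * (t - a)) := mul_gronwallBound_zero_add K B (t - a)

theorem PiecewiseContinuousOn.aestronglyMeasurable {E : Type*} [TopologicalSpace E]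
    [TopologicalSpace.PseudoMetrizableSpace E] {μ : Measure ℝ} [NullSingletonClass μ]
    {u : ℝ → E} {s : Set ℝ}
    (hu : PiecewiseContinuousOn u s) (hs : MeasurableSet s) :
    AEStronglyMeasurable u (μ.restrict s) := by
  obtain ⟨D, hD⟩ := hu
  have hcont : ContinuousOn u (s \ D) := fun t ht => (hD t ht.1 ht.2).mono sdiff_subset
  have hae : (s \ D : Set ℝ) =ᵐ[μ] s :=
    sdiff_ae_eq_self.2 (measure_mono_null inter_subset_right (D.finite_toSet.measure_zero μ))
  rw [← Measure.restrict_congr_set hae]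
  exact hcont.aestronglyMeasurable (hs.diff D.finite_toSet.measurableSet)

theorem intervalIntegrable_of_continuousOn_of_norm_le {E U F : Type*} [NormedAddCommGroup E]
    [NormedAddCommGroup U] [ProperSpace U] [NormedAddCommGroup F]
    {f : E → U → F} (hf : Continuous fun p : E × U => f p.1 p.2) {x : ℝ → E} {u : ℝ → U}
    {a b ρ : ℝ} (hab : a ≤ b) (hx : ContinuousOn x (Icc a b))
    (hum : AEStronglyMeasurable u (volume.restrict (Icc a b)))
    (hu : ∀ t ∈ Icc a b, ‖u t‖ ≤ ρ) :
    IntervalIntegrable (fun t => f (x t) (u t)) volume a b := by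
  rw [intervalIntegrable_iff_integrableOn_Icc_of_le hab]
  obtain ⟨C, hC⟩ := ((isCompact_Icc.image_of_continuousOn hx).prod
    (isCompact_closedBall (0 : U) ρ)).exists_bound_of_continuousOn hf.continuousOn
  refine Integrable.mono' (integrable_const C)
    (hf.comp_aestronglyMeasurable ((hx.aestronglyMeasurable measurableSet_Icc).prodMk hum)) ?_
  filter_upwards [ae_restrict_mem measurableSet_Icc] with t ht
  exact hC (x t, u t) ⟨mem_image_of_mem x ht, mem_closedBall_zero_iff.2 (hu t ht)⟩

theorem IntervalIntegrable.mono_Icc {E : Type*} [NormedAddCommGroup E] {g : ℝ → E}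
    {μ : Measure ℝ} {a b c d : ℝ} (hg : IntervalIntegrable g μ a b) (hc : c ∈ Icc a b)
    (hd : d ∈ Icc a b) : IntervalIntegrable g μ c d :=
  hg.mono_set (uIcc_subset_uIcc (Icc_subset_uIcc hc) (Icc_subset_uIcc hd))

theorem norm_sub_sub_sub_le_of_lip {E U F : Type*} [SeminormedAddCommGroup E]
    [SeminormedAddCommGroup U] [SeminormedAddCommGroup F] {f : E → U → F} {K ρ : ℝ}
    (hLip : ∀ (x' x'' : E) (u' u'' : U), ‖u'‖ ≤ ρ → ‖u''‖ ≤ ρ →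
      ‖f x' u' - f x'' u''‖ ≤ K * (‖x' - x''‖ + ‖u' - u''‖)) (hK : 0 ≤ K)
    {x y z : E} {v w w' : U} (hv : ‖v‖ ≤ ρ) (hw : ‖w‖ ≤ ρ) (hw' : ‖w'‖ ≤ ρ) :
    ‖f y v - f x w - (f z v - f z w')‖ ≤ K * ‖y - x‖ + K * (2 * ‖x - z‖ + ‖w - w'‖) := by
  have hyz := hLip y z v v hv hv
  have hxz := hLip x z w w' hw hw'
  have htri : ‖y - z‖ ≤ ‖y - x‖ + ‖x - z‖ := norm_sub_le_norm_sub_add_norm_sub y x z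
  rw [sub_self, norm_zero, add_zero] at hyz
  calc ‖f y v - f x w - (f z v - f z w')‖
      = ‖(f y v - f z v) - (f x w - f z w')‖ := by congr 1; abel
    _ ≤ ‖f y v - f z v‖ + ‖f x w - f z w'‖ := norm_sub_le _ _
    _ ≤ K * (‖y - x‖ + ‖x - z‖) + K * (‖x - z‖ + ‖w - w'‖) :=
        add_le_add (hyz.trans (by gcongr)) hxz
    _ = K * ‖y - x‖ + K * (2 * ‖x - z‖ + ‖w - w'‖) := by ring

theorem tendsto_inv_smul_integral_of_norm_sub_le {E : Type*} [NormedAddCommGroup E]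
    [NormedSpace ℝ E] [CompleteSpace E] {g : ℝ → ℝ → E} {φ ψ : ℝ → ℝ} {τ : ℝ} {Δ : E}
    (hφ : Tendsto φ (𝓝[>] 0) (𝓝 0)) (hψ : Tendsto ψ (𝓝[≤] τ) (𝓝 0))
    (hg : ∀ᶠ ε in 𝓝[>] 0, IntervalIntegrable (g ε) volume (τ - ε) τ ∧
      ∀ s ∈ Ioc (τ - ε) τ, ‖g ε s - Δ‖ ≤ φ ε + ψ s) :
    Tendsto (fun ε => ε⁻¹ • ∫ s in (τ - ε)..τ, g ε s) (𝓝[>] 0) (𝓝 Δ) := by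
  rw [Metric.tendsto_nhds]
  intro η hη
  obtain ⟨a, ha, hψa⟩ := mem_nhdsLE_iff_exists_Ioc_subset.1 (hψ (Iic_mem_nhds (half_pos hη)))
  filter_upwards [hg, Ioo_mem_nhdsGT (sub_pos.2 (mem_Iio.1 ha)),
    hφ (Iio_mem_nhds (half_pos hη))] with ε ⟨hgi, hgb⟩ hε hφε
  obtain ⟨hε0, hετ⟩ := hε
  have hbound : ∀ s ∈ Ι (τ - ε) τ, ‖g ε s - Δ‖ ≤ φ ε + η / 2 := fun s hs => by
    rw [uIoc_of_le (by linarith)] at hs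
    exact (hgb s hs).trans (by gcongr; exact hψa ⟨by linarith [hs.1], hs.2⟩)
  have havg : (ε⁻¹ • ∫ s in (τ - ε)..τ, g ε s) - Δ = ε⁻¹ • ∫ s in (τ - ε)..τ, (g ε s - Δ) := by
    rw [intervalIntegral.integral_sub hgi intervalIntegrable_const,
      intervalIntegral.integral_const, sub_sub_cancel, smul_sub, smul_smul,
      inv_mul_cancel₀ hε0.ne', one_smul]
  rw [dist_eq_norm, havg, norm_smul, norm_inv, Real.norm_of_nonneg hε0.le]
  calc ε⁻¹ * ‖∫ s in (τ - ε)..τ, (g ε s - Δ)‖ ≤ ε⁻¹ * ((φ ε + η / 2) * |τ - (τ - ε)|) := by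
        gcongr; exact intervalIntegral.norm_integral_le_of_norm_le_const hbound
    _ = φ ε + η / 2 := by rw [sub_sub_cancel, abs_of_pos hε0]; field_simp
    _ < η := by linarith [show φ ε < η / 2 from hφε]

section ControlSystem

variable {nx m : ℕ} {f : EucSp nx → EucSp m → EucSp nx} {u w : ℝ → EucSp m}
  {x y : ℝ → EucSp nx} {a b : ℝ}

theorem IsSolOn.sub_eq_integral (hx : IsSolOn f u a b x)
    (hF : IntervalIntegrable (fun s => f (x s) (u s)) volume a b) {c d : ℝ}
    (hc : c ∈ Icc a b) (hd : d ∈ Icc a b) :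
    x d - x c = ∫ s in c..d, f (x s) (u s) := by
  have ha : a ∈ Icc a b := ⟨le_rfl, hc.1.trans hc.2⟩
  rw [hx.2 d hd, hx.2 c hc, add_sub_add_left_eq_sub,
    intervalIntegral.integral_interval_sub_left (hF.mono_Icc ha hd) (hF.mono_Icc ha hc)]

theorem IsSolOn.mono (hx : IsSolOn f u a b x)
    (hF : IntervalIntegrable (fun s => f (x s) (u s)) volume a b) {c d : ℝ}
    (hac : a ≤ c) (hdb : d ≤ b) : IsSolOn f u c d x :=
  ⟨hx.1.mono (Icc_subset_Icc hac hdb), fun t ht => by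
    rw [← hx.sub_eq_integral hF ⟨hac, ht.1.trans (ht.2.trans hdb)⟩
      ⟨hac.trans ht.1, ht.2.trans hdb⟩, add_sub_cancel]⟩

theorem IsSolOn.norm_sub_le_mul_exp {K ρ M : ℝ}
    (hLip : ∀ (x' x'' : EucSp nx) (u' u'' : EucSp m), ‖u'‖ ≤ ρ → ‖u''‖ ≤ ρ →
      ‖f x' u' - f x'' u''‖ ≤ K * (‖x' - x''‖ + ‖u' - u''‖)) (hK : 0 ≤ K)
    (hx : IsSolOn f u a b x) (hy : IsSolOn f w a b y)
    (hFx : IntervalIntegrable (fun s => f (x s) (u s)) volume a b)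
    (hFy : IntervalIntegrable (fun s => f (y s) (w s)) volume a b)
    (hu : ∀ s ∈ Icc a b, ‖u s‖ ≤ ρ) (hw : ∀ s ∈ Icc a b, ‖w s‖ ≤ ρ)
    (huw : ∀ s ∈ Icc a b, ‖w s - u s‖ ≤ M) (hxy : y a = x a) :
    ∀ t ∈ Icc a b, ‖y t - x t‖ ≤ K * M * (b - a) * exp (K * (b - a)) := by
  intro t ht
  have ha : a ∈ Icc a b := ⟨le_rfl, ht.1.trans ht.2⟩
  have hKM : 0 ≤ K * M := mul_nonneg hK ((norm_nonneg _).trans (huw t ht))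
  have hδ : ContinuousOn (fun s => y s - x s) (Icc a b) := hy.1.sub hx.1
  have hbound : ∀ t ∈ Icc a b,
      ‖y t - x t‖ ≤ K * (∫ s in a..t, ‖y s - x s‖) + K * M * (b - a) := by
    intro t ht
    have hsub : uIcc a t ⊆ Icc a b := by rw [uIcc_of_le ht.1]; exact Icc_subset_Icc le_rfl ht.2
    have hδt : IntervalIntegrable (fun s => ‖y s - x s‖) volume a t :=
      (hδ.norm.mono hsub).intervalIntegrable
    have hdiff : y t - x t = ∫ s in a..t, (f (y s) (w s) - f (x s) (u s)) := by
      rw [intervalIntegral.integral_sub (hFy.mono_Icc ha ht) (hFx.mono_Icc ha ht),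
        ← hy.sub_eq_integral hFy ha ht, ← hx.sub_eq_integral hFx ha ht, hxy,
        sub_sub_sub_cancel_right]
    have hpoint : ∀ s ∈ Ioc a t, ‖f (y s) (w s) - f (x s) (u s)‖ ≤ K * ‖y s - x s‖ + K * M := by
      intro s hs
      have hs' : s ∈ Icc a b := ⟨hs.1.le, hs.2.trans ht.2⟩
      exact (hLip _ _ _ _ (hw s hs') (hu s hs')).trans (by rw [mul_add]; gcongr; exact huw s hs')
    rw [hdiff]
    calc ‖∫ s in a..t, (f (y s) (w s) - f (x s) (u s))‖
        ≤ ∫ s in a..t, (K * ‖y s - x s‖ + K * M) :=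
          intervalIntegral.norm_integral_le_of_norm_le ht.1 (ae_of_all _ hpoint)
            ((hδt.const_mul K).add intervalIntegrable_const)
      _ = K * (∫ s in a..t, ‖y s - x s‖) + K * M * (t - a) := by
          rw [intervalIntegral.integral_add (hδt.const_mul K) intervalIntegrable_const,
            intervalIntegral.integral_const_mul, intervalIntegral.integral_const, smul_eq_mul]
          ring
      _ ≤ K * (∫ s in a..t, ‖y s - x s‖) + K * M * (b - a) := by gcongr; exact ht.2
  calc ‖y t - x t‖ ≤ K * M * (b - a) * exp (K * (t - a)) :=
        norm_le_mul_exp_of_norm_le_integral hK hδ hbound t ht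
    _ ≤ K * M * (b - a) * exp (K * (b - a)) := by
        gcongr
        exacts [mul_nonneg hKM (sub_nonneg.2 ha.2), ht.2]

theorem perturb_of_le {τ ε t : ℝ} {v : EucSp m} (ht : t ≤ τ - ε) :
    perturb u τ v ε t = u t :=
  if_neg fun h => h.1.not_ge ht

theorem perturb_of_mem_Ioc {τ ε t : ℝ} {v : EucSp m} (ht : t ∈ Ioc (τ - ε) τ) :
    perturb u τ v ε t = v :=
  if_pos ht

theorem norm_perturb_le {s : Set ℝ} {ρ τ ε : ℝ} {v : EucSp m} (hu : ∀ t ∈ s, ‖u t‖ ≤ ρ)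
    (hv : ‖v‖ ≤ ρ) : ∀ t ∈ s, ‖perturb u τ v ε t‖ ≤ ρ := fun t ht => by
  unfold perturb
  split_ifs
  exacts [hv, hu t ht]

theorem MeasureTheory.AEStronglyMeasurable.perturb {μ : Measure ℝ} {τ ε : ℝ} {v : EucSp m}
    (hu : AEStronglyMeasurable u μ) : AEStronglyMeasurable (_root_.perturb u τ v ε) μ := by
  have : _root_.perturb u τ v ε = (Ioc (τ - ε) τ).piecewise (fun _ => v) u := by
    ext1 t; simp [_root_.perturb, Set.piecewise]
  rw [this]
  exact aestronglyMeasurable_const.piecewise measurableSet_Ioc hu.restrict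

theorem IsSolOn.perturb_estimates {K ρ τ ε : ℝ} {v : EucSp m}
    (hf : Continuous fun p : EucSp nx × EucSp m => f p.1 p.2)
    (hLip : ∀ (x' x'' : EucSp nx) (u' u'' : EucSp m), ‖u'‖ ≤ ρ → ‖u''‖ ≤ ρ →
      ‖f x' u' - f x'' u''‖ ≤ K * (‖x' - x''‖ + ‖u' - u''‖)) (hK : 0 ≤ K)
    (hx : IsSolOn f u 0 1 x) (hy : IsSolOn f (perturb u τ v ε) 0 1 y) (hxy : y 0 = x 0)
    (hum : AEStronglyMeasurable u (volume.restrict (Icc 0 1)))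
    (hu : ∀ t ∈ Icc (0 : ℝ) 1, ‖u t‖ ≤ ρ) (hv : ‖v‖ ≤ ρ) (hε : ε ∈ Icc 0 τ) (hτ : τ ≤ 1) :
    y τ - x τ = ∫ s in (τ - ε)..τ, (f (y s) (perturb u τ v ε s) - f (x s) (u s)) ∧
      IntervalIntegrable (fun s => f (y s) (perturb u τ v ε s) - f (x s) (u s))
        volume (τ - ε) τ ∧
      ∀ s ∈ Icc (τ - ε) τ, ‖y s - x s‖ ≤ K * (2 * ρ) * ε * exp (K * ε) := by
  have hw := norm_perturb_le (τ := τ) (ε := ε) hu hv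
  have hFx := intervalIntegrable_of_continuousOn_of_norm_le hf zero_le_one hx.1 hum hu
  have hFy := intervalIntegrable_of_continuousOn_of_norm_le hf zero_le_one hy.1 hum.perturb hw
  have h0 : (0 : ℝ) ∈ Icc (0 : ℝ) 1 := ⟨le_rfl, zero_le_one⟩
  have ha : τ - ε ∈ Icc (0 : ℝ) 1 := ⟨sub_nonneg.2 hε.2, by linarith [hε.1]⟩
  have hτ' : τ ∈ Icc (0 : ℝ) 1 := ⟨hε.1.trans hε.2, hτ⟩
  have hsub : ∀ {c d : ℝ}, c ∈ Icc (0 : ℝ) 1 → d ≤ 1 → Icc c d ⊆ Icc (0 : ℝ) 1 :=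
    fun hc hd => Icc_subset_Icc hc.1 hd
  -- the controls agree up to `τ - ε`, hence so do the solutions
  have hstart : y (τ - ε) = x (τ - ε) := by
    have := (hx.mono hFx le_rfl ha.2).norm_sub_le_mul_exp hLip hK (hy.mono hFy le_rfl ha.2)
      (hFx.mono_Icc h0 ha) (hFy.mono_Icc h0 ha) (fun s hs => hu s (hsub h0 ha.2 hs))
      (fun s hs => hw s (hsub h0 ha.2 hs)) (M := 0)
      (fun s hs => by rw [perturb_of_le hs.2, sub_self, norm_zero]) hxy (τ - ε) ⟨ha.1, le_rfl⟩
    simpa [sub_eq_zero] using this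
  refine ⟨?_, (hFy.sub hFx).mono_Icc ha hτ', fun s hs => ?_⟩
  · rw [intervalIntegral.integral_sub (hFy.mono_Icc ha hτ') (hFx.mono_Icc ha hτ'),
      ← hy.sub_eq_integral hFy ha hτ', ← hx.sub_eq_integral hFx ha hτ', hstart,
      sub_sub_sub_cancel_right]
  · have huw : ∀ s ∈ Icc (τ - ε) τ, ‖perturb u τ v ε s - u s‖ ≤ 2 * ρ := fun s hs =>
      (norm_sub_le _ _).trans (by linarith [hu s (hsub ha hτ hs), hw s (hsub ha hτ hs)])
    have := (hx.mono hFx ha.1 hτ).norm_sub_le_mul_exp hLip hK (hy.mono hFy ha.1 hτ)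
      (hFx.mono_Icc ha hτ') (hFy.mono_Icc ha hτ') (fun s hs => hu s (hsub ha hτ hs))
      (fun s hs => hw s (hsub ha hτ hs)) huw hstart s hs
    rwa [sub_sub_cancel] at this

end ControlSystem

/-- Lemma 13: the right derivative
`Ψ₁(τ) = lim_{ε→0⁺} (x₁^ε(τ) − x₁(τ))/ε` exists and equals
`f(x₁(τ), v) − f(x₁(τ), u(τ))`. -/
theorem state_variation_at_perturbation_time {nx m : ℕ} (T : ℕ) (hT : 1 ≤ T)
    (ρmax K₁ : ℝ) (hK₁ : 1 ≤ K₁)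
    (f : EucSp nx → EucSp m → EucSp nx)
    (hf : ContDiff ℝ 1 fun p : EucSp nx × EucSp m => f p.1 p.2)
    (hLip : ∀ (x' x'' : EucSp nx) (u' u'' : EucSp m), ‖u'‖ ≤ ρmax → ‖u''‖ ≤ ρmax →
      ‖f x' u' - f x'' u''‖ ≤ K₁ * (‖x' - x''‖ + ‖u' - u''‖))
    (u : ℝ → EucSp m) (hu : AdmissibleCtrl (T : ℝ) ρmax u)
    (τ : ℝ) (hτ : τ ∈ Set.Ioo (0 : ℝ) 1) (v : EucSp m) (hv : ‖v‖ ≤ ρmax)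
    (huτ : ContinuousWithinAt u (Set.Iic τ) τ)
    (x₀ : EucSp nx) (x : ℝ → EucSp nx) (xe : ℝ → ℝ → EucSp nx)
    (hxnom : x 0 = x₀ ∧ IsSolOn f u 0 1 x)
    (hxe : ∀ ε ∈ Set.Icc (0 : ℝ) τ,
      xe ε 0 = x₀ ∧ IsSolOn f (perturb u τ v ε) 0 1 (xe ε)) :
    Tendsto (fun ε : ℝ => ε⁻¹ • (xe ε τ - x τ))
      (𝓝[>] 0) (𝓝 (f (x τ) v - f (x τ) (u τ))) := by
  obtain ⟨hx0, hx⟩ := hxnom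
  have hK : 0 ≤ K₁ := zero_le_one.trans hK₁
  have hI : Icc (0 : ℝ) 1 ⊆ Icc 0 T := Icc_subset_Icc le_rfl (by exact_mod_cast hT)
  have hu1 : ∀ t ∈ Icc (0 : ℝ) 1, ‖u t‖ ≤ ρmax := fun t ht => hu.2 t (hI ht)
  have hum : AEStronglyMeasurable u (volume.restrict (Icc (0 : ℝ) 1)) :=
    (hu.1.aestronglyMeasurable measurableSet_Icc).mono_measure (Measure.restrict_mono hI le_rfl)
  have hτ1 : τ ∈ Icc (0 : ℝ) 1 := Ioo_subset_Icc_self hτ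
  have hest := fun ε (hε : ε ∈ Ioo 0 τ) => hx.perturb_estimates hf.continuous hLip hK
    (hxe ε (Ioo_subset_Icc_self hε)).2 (by rw [(hxe ε (Ioo_subset_Icc_self hε)).1, hx0]) hum
    hu1 hv (Ioo_subset_Icc_self hε) hτ1.2
  have hφ : Tendsto (fun ε => K₁ * (K₁ * (2 * ρmax) * ε * exp (K₁ * ε))) (𝓝[>] 0) (𝓝 0) :=
    (Continuous.tendsto' (by fun_prop) 0 0 (by simp)).mono_left nhdsWithin_le_nhds
  have hψ : Tendsto (fun s => K₁ * (2 * ‖x s - x τ‖ + ‖u s - u τ‖)) (𝓝[≤] τ) (𝓝 0) := by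
    have hxτ : ContinuousWithinAt x (Iic τ) τ :=
      (hx.1.continuousAt (Icc_mem_nhds hτ.1 hτ.2)).continuousWithinAt
    simpa using (((tendsto_iff_norm_sub_tendsto_zero.1 hxτ).const_mul 2).add
      (tendsto_iff_norm_sub_tendsto_zero.1 huτ)).const_mul K₁
  refine (tendsto_inv_smul_integral_of_norm_sub_le
    (g := fun ε s => f (xe ε s) (perturb u τ v ε s) - f (x s) (u s)) hφ hψ ?_).congr' ?_
  · filter_upwards [Ioo_mem_nhdsGT hτ.1] with ε hε
    refine ⟨(hest ε hε).2.1, fun s hs => ?_⟩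
    have hs1 : s ∈ Icc (0 : ℝ) 1 := ⟨by linarith [hs.1, hε.2], hs.2.trans hτ1.2⟩
    rw [perturb_of_mem_Ioc hs]
    exact (norm_sub_sub_sub_le_of_lip hLip hK hv (hu1 s hs1) (hu1 τ hτ1)).trans
      (by gcongr; exact (hest ε hε).2.2 s (Ioc_subset_Icc_self hs))
  · filter_upwards [Ioo_mem_nhdsGT hτ.1] with ε hε
    rw [(hest ε hε).1]
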